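/- For every integer ℓ ≥ 1, the quantity φ(ℓ) satisfies ℓ + 1 ≤ φ(ℓ) ≤ ⌊(√(12ℓ(ℓ+1)+1) − 1)/2⌋. -/

import Mathlib

open Matrix

noncomputable section

/-- Feasibility predicate for the set in Definition of `φ`: `Y` is a symmetric positive
semidefinite `2ℓ×2ℓ` real matrix with `UᵀYU = M` and both `ℓ×ℓ` diagonal blocks equal to the
identity. -/
def phiFeas (l : ℕ) (U : Matrix (Fin (2*l)) (Fin l) ℝ)
    (M : Matrix (Fin l) (Fin l) ℝ)
    (Y : Matrix (Fin (2*l)) (Fin (2*l)) ℝ) : Prop :=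
  Y.PosSemidef ∧ Uᵀ * Y * U = M ∧
  (∀ i j : Fin l, Y ⟨(i : ℕ), by omega⟩ ⟨(j : ℕ), by omega⟩ = if i = j then (1:ℝ) else 0) ∧
  (∀ i j : Fin l, Y ⟨l + (i : ℕ), by omega⟩ ⟨l + (j : ℕ), by omega⟩ = if i = j then (1:ℝ) else 0)

/-- `φ(ℓ)`: the smallest `k : ℕ` such that for every `U : ℝ^{2ℓ×ℓ}` and every symmetric
`M : ℝ^{ℓ×ℓ}`, the feasible set is either empty or contains an element of rank at most `k`. -/
def phi (l : ℕ) : ℕ :=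
  sInf {k : ℕ |
    ∀ (U : Matrix (Fin (2*l)) (Fin l) ℝ) (M : Matrix (Fin l) (Fin l) ℝ),
      M.IsSymm → (∃ Y, phiFeas l U M Y) → ∃ Y, phiFeas l U M Y ∧ Y.rank ≤ k}


/-!
Upper bound (Barvinok–Pataki). Feasibility only constrains the symmetrised entries of `UᵀYU`
and of the two diagonal blocks, i.e. `3 * (ℓ + 1).choose 2` linear functionals of `Y`. If a
feasible `Y = C Cᵀ` has rank `r` with `(r + 1).choose 2` larger than that, some nonzero
symmetric `Δ` makes `C Δ Cᵀ` invisible to the constraints, and `C (1 + t Δ) Cᵀ` stays feasible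
for the `t` at which `1 + t Δ` is positive semidefinite but singular, which lowers the rank.
Hence some feasible point has `r (r + 1) ≤ 3 ℓ (ℓ + 1)`, i.e. `r ≤ (√(12ℓ(ℓ+1)+1) − 1)/2`.

Lower bound. Take `U = [1; 1]` and `M = 2 (1 + S)` with `S = diag(0, 1, …, 1)`, for which
`[[1, S], [S, 1]]` is feasible. A feasible `Y` has rank `≥ ℓ` because `Y₁₁ = 1`; if its rank is
`ℓ`, it factors as `C Cᵀ` with square row blocks `C₁`, `C₂`, both orthogonal, hence so is the
off-diagonal block `B = C₁ C₂ᵀ`. The constraint forces `diag B = (0, 1, …, 1)`, so the rows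
`2, …, ℓ` of `B` are unit vectors and the first column of `B` vanishes, which is impossible.
-/

namespace Matrix

section Factorization

variable {n : Type*} [Fintype n] [DecidableEq n]

theorem PosSemidef.exists_eq_mul_transpose {κ : Type*} [Fintype κ] {Y : Matrix n n ℝ}
    (hY : Y.PosSemidef) (hκ : Fintype.card κ = Y.rank) : ∃ C : Matrix n κ ℝ, Y = C * Cᵀ := by
  set μ := hY.isHermitian.eigenvalues
  set V : Matrix n n ℝ := (hY.isHermitian.eigenvectorUnitary : Matrix n n ℝ)
  have hspec : Y = V * diagonal μ * Vᵀ := by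
    conv_lhs => rw [hY.isHermitian.spectral_theorem]
    simp [V, μ, star_eq_conjTranspose, conjTranspose_eq_transpose_of_trivial]
  let g : κ ≃ {i // μ i ≠ 0} :=
    Fintype.equivOfCardEq (hκ.trans hY.isHermitian.rank_eq_card_non_zero_eigs)
  let C : Matrix n κ ℝ := of fun p k => V p (g k) * √(μ (g k))
  refine ⟨C, ?_⟩
  ext p q
  have hsqrt : ∀ i, √(μ i) * √(μ i) = μ i :=
    fun i => Real.mul_self_sqrt (hY.eigenvalues_nonneg i)
  calc Y p q = ∑ i, V p i * μ i * V q i := by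
        rw [hspec, mul_apply]; simp [mul_diagonal]
    _ = ∑ i : {i // μ i ≠ 0}, V p i * μ i * V q i := by
        rw [← Finset.sum_filter_of_ne (p := fun i => μ i ≠ 0) fun i _ h => by
          contrapose! h; simp [h]]
        exact Finset.sum_subtype _ (by simp) _
    _ = (C * Cᵀ) p q := by
        rw [mul_apply, ← g.sum_comp]
        refine Finset.sum_congr rfl fun k _ => ?_
        simp only [C, of_apply, transpose_apply]
        linear_combination (-(V p (g k) * V q (g k))) * hsqrt (g k)

theorem IsHermitian.exists_posSemidef_one_add_smul_rank_lt {Δ : Matrix n n ℝ}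
    (hΔ : Δ.IsHermitian) (hΔ0 : Δ ≠ 0) :
    ∃ t : ℝ, (1 + t • Δ).PosSemidef ∧ (1 + t • Δ).rank < Fintype.card n := by
  set ν := hΔ.eigenvalues
  obtain ⟨j, hj⟩ := Function.ne_iff.mp fun h => hΔ0 (hΔ.eigenvalues_eq_zero_iff.mp h)
  obtain ⟨i₀, -, hmax⟩ :=
    Finset.exists_max_image Finset.univ (fun i => |ν i|) ⟨j, Finset.mem_univ j⟩
  have hν₀ : ν i₀ ≠ 0 := fun h0 =>
    hj <| abs_nonpos_iff.mp <| by simpa [h0] using hmax j (Finset.mem_univ j)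
  -- with `t = -1 / ν i₀`, the eigenvalues `1 - ν i / ν i₀` of `1 + t • Δ` are `≥ 0`
  -- because `|ν i₀|` is maximal, and the one at `i₀` vanishes
  set d : n → ℝ := fun i => 1 - ν i / ν i₀
  have hd : ∀ i, 0 ≤ d i := fun i => by
    have h : |ν i / ν i₀| ≤ 1 := by
      rw [abs_div]; exact div_le_one_of_le₀ (hmax i (Finset.mem_univ i)) (abs_nonneg _)
    simp only [d]; linarith [(abs_le.mp h).2]
  have hdiag : 1 + (-(ν i₀)⁻¹) • Δ =
      Unitary.conjStarAlgAut ℝ _ hΔ.eigenvectorUnitary (diagonal d) := by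
    conv_lhs => rw [hΔ.spectral_theorem]
    rw [← map_one (Unitary.conjStarAlgAut ℝ _ hΔ.eigenvectorUnitary), ← map_smul, ← map_add]
    congr 1
    ext i k
    by_cases h : i = k <;> simp [d, ν, h, div_eq_inv_mul, sub_eq_add_neg]
  refine ⟨-(ν i₀)⁻¹, ?_, ?_⟩
  · rw [hdiag, Unitary.conjStarAlgAut_apply, star_eq_conjTranspose]
    exact (posSemidef_diagonal_iff.mpr hd).mul_mul_conjTranspose_same _
  · calc (1 + (-(ν i₀)⁻¹) • Δ).rank = (diagonal d).rank := by
          rw [hdiag, Unitary.conjStarAlgAut_apply, ← Unitary.coe_star]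
          simp [-isUnit_iff_ne_zero, -Unitary.coe_star]
      _ = Fintype.card {i // d i ≠ 0} := rank_diagonal d
      _ < Fintype.card n := Fintype.card_subtype_lt (x := i₀) (by simp [d, hν₀])

end Factorization

section Sym2

variable {n : Type*}

def ofSym2 : (Sym2 n → ℝ) →ₗ[ℝ] Matrix n n ℝ where
  toFun x := of fun i j => x s(i, j)
  map_add' _ _ := rfl
  map_smul' _ _ := rfl

@[simp]
theorem ofSym2_apply (x : Sym2 n → ℝ) (i j : n) : ofSym2 x i j = x s(i, j) := rfl

theorem ofSym2_injective : Function.Injective (ofSym2 (n := n)) := fun x y h => by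
  funext z
  induction z using Sym2.ind with
  | h i j => exact congrFun (congrFun h i) j

theorem isHermitian_ofSym2 (x : Sym2 n → ℝ) : (ofSym2 x).IsHermitian := by
  ext i j
  simp [Sym2.eq_swap]

def symEntries : Matrix n n ℝ →ₗ[ℝ] Sym2 n → ℝ where
  toFun A := Sym2.lift ⟨fun i j => A i j + A j i, fun _ _ => add_comm _ _⟩
  map_add' A B := by ext ⟨i, j⟩; simp; ring
  map_smul' c A := by ext ⟨i, j⟩; simp; ring

theorem IsHermitian.eq_of_symEntries_eq {A B : Matrix n n ℝ} (hA : A.IsHermitian)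
    (hB : B.IsHermitian) (h : symEntries A = symEntries B) : A = B := by
  ext i j
  have hij := congrFun h s(i, j)
  simp only [symEntries, LinearMap.coe_mk, AddHom.coe_mk, Sym2.lift_mk] at hij
  have hAij := hA.apply i j
  have hBij := hB.apply i j
  simp only [star_trivial] at hAij hBij
  linarith

end Sym2

section RankReduction

variable {n V : Type*} [Fintype n] [DecidableEq n] [AddCommGroup V] [Module ℝ V]
  [FiniteDimensional ℝ V]

theorem PosSemidef.exists_rank_lt (L : Matrix n n ℝ →ₗ[ℝ] V) {Y : Matrix n n ℝ}
    (hY : Y.PosSemidef) (hdim : Module.finrank ℝ V < (Y.rank + 1).choose 2) :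
    ∃ Y', Y'.PosSemidef ∧ L Y' = L Y ∧ Y'.rank < Y.rank := by
  obtain ⟨C, hC⟩ := hY.exists_eq_mul_transpose (Fintype.card_fin _)
  let G : (Sym2 (Fin Y.rank) → ℝ) →ₗ[ℝ] V :=
    { toFun x := L (C * ofSym2 x * Cᵀ)
      map_add' x y := by rw [map_add, Matrix.mul_add, Matrix.add_mul, map_add]
      map_smul' c x := by rw [map_smul, Matrix.mul_smul, Matrix.smul_mul, map_smul]; rfl }
  obtain ⟨x, hxG, hx0⟩ := (Submodule.ne_bot_iff _).mp <| LinearMap.ker_ne_bot_of_finrank_lt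
    (f := G) (by simpa [Sym2.card] using hdim)
  have hGx : L (C * ofSym2 x * Cᵀ) = 0 := hxG
  obtain ⟨t, hP, hPrank⟩ := (isHermitian_ofSym2 x).exists_posSemidef_one_add_smul_rank_lt
    (fun h => hx0 (ofSym2_injective (h.trans (map_zero _).symm)))
  refine ⟨C * (1 + t • ofSym2 x) * Cᵀ, ?_, ?_, ?_⟩
  · simpa [conjTranspose_eq_transpose_of_trivial] using hP.mul_mul_conjTranspose_same C
  · rw [Matrix.mul_add, Matrix.add_mul, Matrix.mul_one, Matrix.mul_smul, Matrix.smul_mul, ← hC,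
      map_add, map_smul, hGx, smul_zero, add_zero]
  · calc (C * (1 + t • ofSym2 x) * Cᵀ).rank ≤ (1 + t • ofSym2 x).rank :=
          (rank_mul_le_left _ _).trans (rank_mul_le_right _ _)
      _ < Y.rank := by simpa using hPrank

theorem PosSemidef.exists_choose_rank_le (L : Matrix n n ℝ →ₗ[ℝ] V) {Y : Matrix n n ℝ}
    (hY : Y.PosSemidef) :
    ∃ Y', Y'.PosSemidef ∧ L Y' = L Y ∧ (Y'.rank + 1).choose 2 ≤ Module.finrank ℝ V := by
  induction h : Y.rank using Nat.strong_induction_on generalizing Y with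
  | _ r ih =>
    by_cases hdim : Module.finrank ℝ V < (Y.rank + 1).choose 2
    · obtain ⟨Y', hY', hLY', hlt⟩ := hY.exists_rank_lt L hdim
      obtain ⟨Y'', hY'', hLY'', hle⟩ := ih _ (h ▸ hlt) hY' rfl
      exact ⟨Y'', hY'', hLY''.trans hLY', hle⟩
    · exact ⟨Y, hY, rfl, not_lt.mp hdim⟩

end RankReduction

section Orthogonal

variable {m : Type*} [Fintype m] [DecidableEq m]

theorem apply_eq_zero_of_mem_orthogonalGroup {B : Matrix m m ℝ}
    (hB : B ∈ orthogonalGroup m ℝ) {i k : m} (hii : B i i = 1) (hki : k ≠ i) : B i k = 0 := by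
  have hrow : ∑ j, B i j ^ 2 = 1 := by
    simpa [mul_apply, sq] using congrFun (congrFun ((mem_orthogonalGroup_iff m ℝ).mp hB) i) i
  rw [← Finset.add_sum_erase _ _ (Finset.mem_univ i), hii] at hrow
  have hrest : ∑ j ∈ Finset.univ.erase i, B i j ^ 2 = 0 := by linarith
  exact pow_eq_zero_iff two_ne_zero |>.mp <|
    (Finset.sum_eq_zero_iff_of_nonneg fun j _ => sq_nonneg (B i j)).mp hrest k
      (Finset.mem_erase.mpr ⟨hki, Finset.mem_univ k⟩)

theorem PosSemidef.toBlocks₁₂_mem_orthogonalGroup {Y : Matrix (m ⊕ m) (m ⊕ m) ℝ}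
    (hY : Y.PosSemidef) (hrank : Y.rank ≤ Fintype.card m) (h₁₁ : Y.toBlocks₁₁ = 1)
    (h₂₂ : Y.toBlocks₂₂ = 1) : Y.toBlocks₁₂ ∈ orthogonalGroup m ℝ := by
  have hcard : Fintype.card m = Y.rank := by
    refine le_antisymm ?_ hrank
    have h := rank_submatrix_le Y Sum.inl Sum.inl
    rwa [show Y.submatrix Sum.inl Sum.inl = 1 from h₁₁, rank_one] at h
  obtain ⟨C, hC⟩ := hY.exists_eq_mul_transpose hcard
  rw [← fromRows_toRows C, transpose_fromRows, fromRows_mul_fromCols] at hC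
  rw [hC, toBlocks_fromBlocks₁₁] at h₁₁
  rw [hC, toBlocks_fromBlocks₂₂] at h₂₂
  rw [hC, toBlocks_fromBlocks₁₂, mem_orthogonalGroup_iff', transpose_mul, transpose_transpose]
  calc C.toRows₂ * C.toRows₁ᵀ * (C.toRows₁ * C.toRows₂ᵀ)
      = C.toRows₂ * (C.toRows₁ᵀ * C.toRows₁) * C.toRows₂ᵀ := by simp only [Matrix.mul_assoc]
    _ = 1 := by rw [mul_eq_one_comm.mp h₁₁, Matrix.mul_one, h₂₂]

end Orthogonal

end Matrix

def blockEquiv (l : ℕ) : Fin l ⊕ Fin l ≃ Fin (2 * l) :=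
  finSumFinEquiv.trans (finCongr (two_mul l).symm)

theorem phiFeas_iff {l : ℕ} {U : Matrix (Fin (2 * l)) (Fin l) ℝ} {M : Matrix (Fin l) (Fin l) ℝ}
    {Y : Matrix (Fin (2 * l)) (Fin (2 * l)) ℝ} :
    phiFeas l U M Y ↔ Y.PosSemidef ∧ Uᵀ * Y * U = M ∧
      (Y.submatrix (blockEquiv l) (blockEquiv l)).toBlocks₁₁ = 1 ∧
      (Y.submatrix (blockEquiv l) (blockEquiv l)).toBlocks₂₂ = 1 := by
  simp only [phiFeas, ← Matrix.ext_iff, one_apply]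
  rfl

def phiConstraints (l : ℕ) (U : Matrix (Fin (2 * l)) (Fin l) ℝ) :
    Matrix (Fin (2 * l)) (Fin (2 * l)) ℝ →ₗ[ℝ]
      (Sym2 (Fin l) → ℝ) × (Sym2 (Fin l) → ℝ) × (Sym2 (Fin l) → ℝ) where
  toFun Y := (symEntries (Uᵀ * Y * U),
    symEntries (Y.submatrix (blockEquiv l) (blockEquiv l)).toBlocks₁₁,
    symEntries (Y.submatrix (blockEquiv l) (blockEquiv l)).toBlocks₂₂)
  map_add' Y Z := by
    simp only [Matrix.mul_add, Matrix.add_mul, ← map_add, Prod.mk_add_mk]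
    rfl
  map_smul' c Y := by
    simp only [Matrix.mul_smul, Matrix.smul_mul, ← map_smul, Prod.smul_mk, RingHom.id_apply]
    rfl

theorem finrank_sym2_prod (l : ℕ) :
    Module.finrank ℝ ((Sym2 (Fin l) → ℝ) × (Sym2 (Fin l) → ℝ) × (Sym2 (Fin l) → ℝ)) =
      3 * (l + 1).choose 2 := by
  simp [Module.finrank_prod, Sym2.card]; ring

theorem exists_phiFeas_choose_rank_le {l : ℕ} {U : Matrix (Fin (2 * l)) (Fin l) ℝ}
    {M : Matrix (Fin l) (Fin l) ℝ} (h : ∃ Y, phiFeas l U M Y) :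
    ∃ Y, phiFeas l U M Y ∧ (Y.rank + 1).choose 2 ≤ 3 * (l + 1).choose 2 := by
  obtain ⟨Y, hY⟩ := h
  obtain ⟨hpsd, hUYU, h₁₁, h₂₂⟩ := phiFeas_iff.mp hY
  obtain ⟨Y', hY', hLY, hrank⟩ := hpsd.exists_choose_rank_le (phiConstraints l U)
  simp only [phiConstraints, LinearMap.coe_mk, AddHom.coe_mk, Prod.mk.injEq] at hLY
  obtain ⟨hL₁, hL₂, hL₃⟩ := hLY
  have hquad : ∀ {Z : Matrix (Fin (2 * l)) (Fin (2 * l)) ℝ}, Z.PosSemidef →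
      (Uᵀ * Z * U).IsHermitian := fun hZ => by
    simpa [conjTranspose_eq_transpose_of_trivial] using (hZ.conjTranspose_mul_mul_same U).1
  have hblock : ∀ {Z : Matrix (Fin (2 * l)) (Fin (2 * l)) ℝ}, Z.PosSemidef →
      (Z.submatrix (blockEquiv l ∘ Sum.inl) (blockEquiv l ∘ Sum.inl)).IsHermitian ∧
      (Z.submatrix (blockEquiv l ∘ Sum.inr) (blockEquiv l ∘ Sum.inr)).IsHermitian :=
    fun hZ => ⟨(hZ.submatrix _).1, (hZ.submatrix _).1⟩
  refine ⟨Y', phiFeas_iff.mpr ⟨hY', ?_, ?_, ?_⟩, ?_⟩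
  · rw [(hquad hY').eq_of_symEntries_eq (hquad hpsd) hL₁, hUYU]
  · rw [← h₁₁]; exact (hblock hY').1.eq_of_symEntries_eq (hblock hpsd).1 hL₂
  · rw [← h₂₂]; exact (hblock hY').2.eq_of_symEntries_eq (hblock hpsd).2 hL₃
  · rwa [finrank_sym2_prod] at hrank

theorem natCast_le_of_choose_two_le {r l : ℕ} (h : (r + 1).choose 2 ≤ 3 * (l + 1).choose 2) :
    (r : ℝ) ≤ (√(12 * (l : ℝ) * ((l : ℝ) + 1) + 1) - 1) / 2 := by
  have h' : ((r + 1).choose 2 : ℝ) ≤ 3 * (l + 1).choose 2 := by exact_mod_cast h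
  simp only [Nat.cast_choose_two, Nat.cast_add, Nat.cast_one, add_sub_cancel_right] at h'
  have hsqrt : 2 * (r : ℝ) + 1 ≤ √(12 * (l : ℝ) * ((l : ℝ) + 1) + 1) :=
    (Real.le_sqrt (by positivity) (by positivity)).mpr (by nlinarith)
  linarith

def stackedIdentity (l : ℕ) : Matrix (Fin (2 * l)) (Fin l) ℝ :=
  (fromRows 1 1).submatrix (blockEquiv l).symm id

theorem stackedIdentity_transpose_mul_mul {l : ℕ}
    (B : Matrix (Fin l ⊕ Fin l) (Fin l ⊕ Fin l) ℝ) :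
    (stackedIdentity l)ᵀ * B.submatrix (blockEquiv l).symm (blockEquiv l).symm *
      stackedIdentity l = B.toBlocks₁₁ + B.toBlocks₁₂ + B.toBlocks₂₁ + B.toBlocks₂₂ := by
  rw [stackedIdentity, transpose_submatrix, transpose_fromRows, submatrix_mul_equiv,
    submatrix_mul_equiv, submatrix_id_id, ← fromBlocks_toBlocks B, fromCols_mul_fromBlocks,
    fromCols_mul_fromRows]
  simp only [transpose_one, Matrix.one_mul, Matrix.mul_one, toBlocks_fromBlocks₁₁,
    toBlocks_fromBlocks₁₂, toBlocks_fromBlocks₂₁, toBlocks_fromBlocks₂₂]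
  abel

def diagOneExcept {l : ℕ} (i₀ : Fin l) : Matrix (Fin l) (Fin l) ℝ :=
  diagonal fun i => if i = i₀ then 0 else 1

theorem phiFeas_stackedIdentity {l : ℕ} (i₀ : Fin l) :
    phiFeas l (stackedIdentity l) (2 • (1 + diagOneExcept i₀))
      ((fromBlocks 1 (diagOneExcept i₀) (diagOneExcept i₀) 1).submatrix
        (blockEquiv l).symm (blockEquiv l).symm) := by
  set S := diagOneExcept i₀ with hS_def
  have hS : Sᴴ = S := by simp [S, diagOneExcept]
  have hblocks : ((fromBlocks 1 S S 1).submatrix (blockEquiv l).symm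
      (blockEquiv l).symm).submatrix (blockEquiv l) (blockEquiv l) = fromBlocks 1 S S 1 := by
    simp [submatrix_submatrix]
  refine phiFeas_iff.mpr ⟨?_, ?_, ?_, ?_⟩
  · refine PosSemidef.submatrix ?_ _
    nth_rewrite 2 [← hS]
    let _ : Invertible (1 : Matrix (Fin l) (Fin l) ℝ) := invertibleOne
    refine (PosDef.fromBlocks₁₁ S 1 PosDef.one).mpr ?_
    rw [hS, inv_one, Matrix.mul_one, hS_def, diagOneExcept, diagonal_mul_diagonal,
      ← diagonal_one, diagonal_sub]
    exact posSemidef_diagonal_iff.mpr fun i => by split_ifs <;> norm_num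
  · rw [stackedIdentity_transpose_mul_mul, toBlocks_fromBlocks₁₁, toBlocks_fromBlocks₁₂,
      toBlocks_fromBlocks₂₁, toBlocks_fromBlocks₂₂, two_smul]
    abel
  · rw [hblocks, toBlocks_fromBlocks₁₁]
  · rw [hblocks, toBlocks_fromBlocks₂₂]

theorem succ_le_rank_of_phiFeas_stackedIdentity {l : ℕ} (i₀ : Fin l)
    {Y : Matrix (Fin (2 * l)) (Fin (2 * l)) ℝ}
    (hY : phiFeas l (stackedIdentity l) (2 • (1 + diagOneExcept i₀)) Y) : l + 1 ≤ Y.rank := by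
  obtain ⟨hpsd, hUYU, h₁₁, h₂₂⟩ := phiFeas_iff.mp hY
  set B := Y.submatrix (blockEquiv l) (blockEquiv l) with hB
  have hBpsd : B.PosSemidef := hpsd.submatrix _
  by_contra! hrank
  have horth : B.toBlocks₁₂ ∈ orthogonalGroup (Fin l) ℝ :=
    hBpsd.toBlocks₁₂_mem_orthogonalGroup (by simpa [hB] using Nat.lt_succ_iff.mp hrank) h₁₁ h₂₂
  have hdiag : ∀ i, B.toBlocks₁₂ i i = if i = i₀ then 0 else 1 := by
    intro i
    have hsymm : B.toBlocks₂₁ i i = B.toBlocks₁₂ i i := by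
      simpa [toBlocks₁₂, toBlocks₂₁] using hBpsd.1.apply (Sum.inl i) (Sum.inr i)
    have hii := congrFun (congrFun hUYU i) i
    rw [show Y = B.submatrix (blockEquiv l).symm (blockEquiv l).symm by
        simp [hB, submatrix_submatrix],
      stackedIdentity_transpose_mul_mul, h₁₁, h₂₂] at hii
    simp [diagOneExcept, hsymm] at hii
    split_ifs at hii ⊢ <;> linarith
  obtain ⟨k, hk⟩ : ∃ k, B.toBlocks₁₂ k i₀ ≠ 0 := by
    by_contra! h
    simpa [mul_apply, h] using
      congrFun (congrFun ((mem_orthogonalGroup_iff' _ _).mp horth) i₀) i₀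
  by_cases hki : k = i₀
  · subst hki
    simp [hdiag] at hk
  · exact hk (apply_eq_zero_of_mem_orthogonalGroup horth (by simp [hdiag, hki]) (Ne.symm hki))

theorem le_phi {l a : ℕ}
    (h : ∀ k, (∀ (U : Matrix (Fin (2 * l)) (Fin l) ℝ) (M : Matrix (Fin l) (Fin l) ℝ),
      M.IsSymm → (∃ Y, phiFeas l U M Y) → ∃ Y, phiFeas l U M Y ∧ Y.rank ≤ k) → a ≤ k) :
    a ≤ phi l :=
  le_csInf ⟨2 * l, fun _ _ _ ⟨Y, hY⟩ =>
    ⟨Y, hY, (rank_le_card_width Y).trans (Fintype.card_fin _).le⟩⟩ h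

theorem phi_le {l k : ℕ}
    (h : ∀ (U : Matrix (Fin (2 * l)) (Fin l) ℝ) (M : Matrix (Fin l) (Fin l) ℝ),
      (∃ Y, phiFeas l U M Y) → ∃ Y, phiFeas l U M Y ∧ Y.rank ≤ k) : phi l ≤ k :=
  Nat.sInf_le fun U M _ => h U M

theorem phi_bounds (l : ℕ) (hl : 1 ≤ l) :
    l + 1 ≤ phi l ∧
    (phi l : ℤ) ≤ ⌊(Real.sqrt (12 * (l : ℝ) * ((l : ℝ) + 1) + 1) - 1) / 2⌋ := by
  constructor
  · refine le_phi fun k hk => ?_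
    obtain ⟨Y, hY, hrank⟩ := hk _ _ ((isSymm_one.add (isSymm_diagonal _)).smul 2)
      ⟨_, phiFeas_stackedIdentity ⟨0, hl⟩⟩
    exact (succ_le_rank_of_phiFeas_stackedIdentity _ hY).trans hrank
  · have hx : 0 ≤ (√(12 * (l : ℝ) * ((l : ℝ) + 1) + 1) - 1) / 2 := by
      have : 1 ≤ √(12 * (l : ℝ) * ((l : ℝ) + 1) + 1) := Real.one_le_sqrt.mpr (by nlinarith)
      linarith
    rw [← Int.natCast_floor_eq_floor hx, Nat.cast_le]
    refine phi_le fun U M hfeas => ?_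
    obtain ⟨Y, hY, hrank⟩ := exists_phiFeas_choose_rank_le hfeas
    exact ⟨Y, hY, Nat.le_floor (natCast_le_of_choose_two_le hrank)⟩
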